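/- Let s ≥ n ≥ 1 and let M be an s×n complex matrix of rank r with singular values σ₁ ≥ … ≥ σₙ ≥ 0. Let m be an integer with n−r ≤ m ≤ n and set ε = (3a_m + 1 − √((3a_m+1)² − 16a_m))/(4g_m). If a_m < 1/9, then M has ε-rank equal to n−m; that is, σ₁ ≥ … ≥ σ_{n−m} > ε ≥ σ_{n−m+1} ≥ … ≥ σₙ. -/

import Mathlib

/-!
The polynomial `p z = ∏ j, (σ j + z) = ∑ i, s_{n-i} z ^ i` has the roots `-σ j`. The bounds
`s_{n-i} ≤ b_m ^ (m-i) s_{n-m}` and `s_{n-i} ≤ g_m ^ (i-m) s_{n-m}` turn the other terms of `p`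
on the circle `|z| = ρ` into two geometric tails, with ratios `a_m / u` and `u` for `u = g_m ρ`;
their sum stays below the `m`-th term exactly when `2 u² - (3 a_m + 1) u + 2 a_m < 0`, i.e.
when `g_m ε < u < g_m ε'` with `ε, ε'` given by the two roots. On such a circle
`Re (p z * z̄ ^ m) > 0`, so `p` winds `m` times around `0`, while the factors with `σ j < ρ`
contribute one turn each and the others none. Hence exactly `m` of the `σ j` lie below every
`ρ ∈ (ε, ε')`, and letting `ρ` decrease to `ε` gives the `ε`-rank.
-/

open Finset

/-- The `k`-th elementary symmetric function of the values `σ i`, `i : Fin n`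
(with the convention `esym σ 0 = 1`). -/
noncomputable def esym {n : ℕ} (σ : Fin n → ℝ) (k : ℕ) : ℝ :=
  ∑ t ∈ Finset.univ.powersetCard k, ∏ i ∈ t, σ i

/-- `b_m = max_{0 ≤ i ≤ m-1} (s_{n-i}/s_{n-m})^{1/(m-i)}` (as an `sSup`,
which is `0` for `m = 0` by convention). -/
noncomputable def bQ (n : ℕ) (σ : Fin n → ℝ) (m : ℕ) : ℝ :=
  sSup ((fun i : ℕ => (esym σ (n - i) / esym σ (n - m)) ^ ((1 : ℝ) / ((m : ℝ) - (i : ℝ)))) ''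
    (Set.Iio m))

/-- `g_m = max_{m+1 ≤ i ≤ n} (s_{n-i}/s_{n-m})^{1/(i-m)}`, with the convention `g_n = 1`. -/
noncomputable def gQ (n : ℕ) (σ : Fin n → ℝ) (m : ℕ) : ℝ :=
  if m = n then 1 else
    sSup ((fun i : ℕ => (esym σ (n - i) / esym σ (n - m)) ^ ((1 : ℝ) / ((i : ℝ) - (m : ℝ)))) ''
      (Set.Icc (m + 1) n))

/-- `a_m = b_m · g_m`. -/
noncomputable def aQ (n : ℕ) (σ : Fin n → ℝ) (m : ℕ) : ℝ := bQ n σ m * gQ n σ m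

open Complex

section Esym

variable {n : ℕ} {σ : Fin n → ℝ}

lemma esym_nonneg (hσ : ∀ i, 0 ≤ σ i) (k : ℕ) : 0 ≤ esym σ k :=
  sum_nonneg fun _ _ => prod_nonneg fun i _ => hσ i

lemma esym_pos (hσ : ∀ i, 0 ≤ σ i) {k : ℕ} (hk : k ≤ n)
    (hpos : ∀ i : Fin n, (i : ℕ) < k → 0 < σ i) : 0 < esym σ k := by
  set t : Finset (Fin n) := univ.map (Fin.castLEEmb hk)
  have ht : t ∈ univ.powersetCard k := mem_powersetCard.mpr ⟨subset_univ _, by simp [t]⟩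
  have htpos : 0 < ∏ i ∈ t, σ i := prod_pos fun i hi => by
    obtain ⟨j, -, rfl⟩ := mem_map.mp hi
    exact hpos _ j.isLt
  exact htpos.trans_le <|
    single_le_sum (f := fun s => ∏ i ∈ s, σ i) (fun s _ => prod_nonneg fun i _ => hσ i) ht

variable (σ) in
lemma prod_ofReal_add_eq_sum_esym (z : ℂ) :
    ∏ j, ((σ j : ℂ) + z) = ∑ i ∈ range (n + 1), (esym σ (n - i) : ℂ) * z ^ i := by
  rw [prod_add, sum_powerset, card_univ, Fintype.card_fin, ← sum_range_reflect]
  refine sum_congr rfl fun i hi => ?_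
  have hi : i ≤ n := Nat.lt_succ_iff.mp (mem_range.mp hi)
  rw [Nat.add_sub_cancel, esym, Complex.ofReal_sum, sum_mul]
  refine sum_congr rfl fun t ht => ?_
  obtain ⟨-, htcard⟩ := mem_powersetCard.mp ht
  rw [prod_const, card_univ_sdiff, Fintype.card_fin, htcard, Nat.sub_sub_self hi,
    Complex.ofReal_prod]

end Esym

lemma sum_range_pow_succ_le_div {x : ℝ} (hx₀ : 0 ≤ x) (hx₁ : x < 1) (N : ℕ) :
    ∑ j ∈ range N, x ^ (j + 1) ≤ x / (1 - x) := by
  simp_rw [pow_succ']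
  rw [← mul_sum, div_eq_mul_one_div]
  exact mul_le_mul_of_nonneg_left
    (by simpa using geom_sum_Ico_le_of_lt_one (m := 0) (n := N) hx₀ hx₁) hx₀

section GeometricTails

variable {c : ℕ → ℝ} {m : ℕ} {ρ : ℝ}

lemma sum_range_mul_pow_le {b : ℝ} (hc : 0 ≤ c m) (hb : 0 ≤ b) (hρ : 0 < ρ) (hb₁ : b / ρ < 1)
    (hlow : ∀ i < m, c i ≤ b ^ (m - i) * c m) :
    ∑ i ∈ range m, c i * ρ ^ i ≤ c m * ρ ^ m * (b / ρ / (1 - b / ρ)) :=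
  calc ∑ i ∈ range m, c i * ρ ^ i
      ≤ ∑ i ∈ range m, c m * ρ ^ m * (b / ρ) ^ (m - i) := by
        refine sum_le_sum fun i hi => ?_
        have him : i < m := mem_range.mp hi
        calc c i * ρ ^ i ≤ b ^ (m - i) * c m * ρ ^ i := by gcongr; exact hlow i him
          _ = c m * ρ ^ m * (b / ρ) ^ (m - i) := by
            rw [div_pow, ← Nat.sub_add_cancel him.le, pow_add, Nat.add_sub_cancel]
            field_simp
    _ = c m * ρ ^ m * ∑ j ∈ range m, (b / ρ) ^ (j + 1) := by
        rw [mul_sum, ← sum_range_reflect]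
        refine sum_congr rfl fun j hj => ?_
        rw [show m - (m - 1 - j) = j + 1 by simp only [mem_range] at hj; omega]
    _ ≤ _ := by gcongr; exact sum_range_pow_succ_le_div (by positivity) hb₁ m

lemma sum_Ico_mul_pow_le {g : ℝ} {N : ℕ} (hc : 0 ≤ c m) (hg : 0 ≤ g) (hρ : 0 ≤ ρ)
    (hg₁ : g * ρ < 1) (hhigh : ∀ i, m < i → i ≤ N → c i ≤ g ^ (i - m) * c m) :
    ∑ i ∈ Ico (m + 1) (N + 1), c i * ρ ^ i ≤ c m * ρ ^ m * (g * ρ / (1 - g * ρ)) :=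
  calc ∑ i ∈ Ico (m + 1) (N + 1), c i * ρ ^ i
      ≤ ∑ i ∈ Ico (m + 1) (N + 1), c m * ρ ^ m * (g * ρ) ^ (i - m) := by
        refine sum_le_sum fun i hi => ?_
        obtain ⟨hmi, hiN⟩ := mem_Ico.mp hi
        calc c i * ρ ^ i ≤ g ^ (i - m) * c m * ρ ^ i := by gcongr; exact hhigh i hmi (by omega)
          _ = c m * ρ ^ m * (g * ρ) ^ (i - m) := by
            rw [mul_pow, ← Nat.sub_add_cancel (show m ≤ i by omega), pow_add, Nat.add_sub_cancel]
            ring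
    _ = c m * ρ ^ m * ∑ j ∈ range (N - m), (g * ρ) ^ (j + 1) := by
        rw [mul_sum, sum_Ico_eq_sum_range, show N + 1 - (m + 1) = N - m by omega]
        refine sum_congr rfl fun j _ => ?_
        rw [show m + 1 + j - m = j + 1 by omega]
    _ ≤ _ := by gcongr; exact sum_range_pow_succ_le_div (by positivity) hg₁ _

lemma sum_erase_mul_pow_lt {N : ℕ} (hm : m ≤ N) (hc : 0 < c m) {b g : ℝ} (hb : 0 ≤ b)
    (hg : 0 ≤ g) (hρ : 0 < ρ) (hlow : ∀ i < m, c i ≤ b ^ (m - i) * c m)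
    (hhigh : ∀ i, m < i → i ≤ N → c i ≤ g ^ (i - m) * c m) (hb₁ : b / ρ < 1) (hg₁ : g * ρ < 1)
    (hsum : b / ρ / (1 - b / ρ) + g * ρ / (1 - g * ρ) < 1) :
    ∑ i ∈ (range (N + 1)).erase m, c i * ρ ^ i < c m * ρ ^ m := by
  have hsplit : (range (N + 1)).erase m = range m ∪ Ico (m + 1) (N + 1) := by
    ext i
    simp only [mem_erase, mem_range, mem_union, mem_Ico]
    omega
  have hdisj : Disjoint (range m) (Ico (m + 1) (N + 1)) :=
    disjoint_left.2 fun i hi hi' => by simp only [mem_range, mem_Ico] at hi hi'; omega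
  calc ∑ i ∈ (range (N + 1)).erase m, c i * ρ ^ i
      ≤ c m * ρ ^ m * (b / ρ / (1 - b / ρ) + g * ρ / (1 - g * ρ)) := by
        rw [hsplit, sum_union hdisj, mul_add]
        exact add_le_add (sum_range_mul_pow_le hc.le hb hρ hb₁ hlow)
          (sum_Ico_mul_pow_le hc.le hg hρ.le hg₁ hhigh)
    _ < c m * ρ ^ m := mul_lt_of_lt_one_right (by positivity) hsum

end GeometricTails

lemma Complex.prod_eq_prod_norm_mul_exp_sum_arg {ι : Type*} (s : Finset ι) (w : ι → ℂ) :
    ∏ j ∈ s, w j = (∏ j ∈ s, ‖w j‖ : ℝ) * exp ((∑ j ∈ s, arg (w j) : ℝ) * I) := by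
  conv_lhs => rw [← prod_congr rfl fun j _ => norm_mul_exp_arg_mul_I (w j)]
  rw [prod_mul_distrib, ← exp_sum]
  push_cast
  rw [sum_mul]

lemma abs_lt_pi_div_two_of_cos_pos {F : ℝ → ℝ} (hF : Continuous F)
    (hcos : ∀ θ, 0 < Real.cos (F θ)) (h₀ : F 0 = 0) (x : ℝ) : |F x| < Real.pi / 2 := by
  have hrange : ∀ y ∈ Set.range F, 0 < Real.cos y := by
    rintro _ ⟨θ, rfl⟩
    exact hcos θ
  have hpi := Real.pi_pos
  rw [abs_lt]
  constructor
  · by_contra! h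
    have := hrange _ <| (isPreconnected_range hF).Icc_subset ⟨x, rfl⟩ ⟨0, h₀⟩
      ⟨h, by linarith⟩
    simp at this
  · by_contra! h
    have := hrange _ <| (isPreconnected_range hF).Icc_subset ⟨0, h₀⟩ ⟨x, rfl⟩
      ⟨by linarith, h⟩
    simp at this

section Circle

variable {n : ℕ} {σ : Fin n → ℝ} {ρ : ℝ}

-- `σ j + ρ e^{iθ}`, divided by `e^{iθ}` when `σ j < ρ`, so that it stays in the right half-plane.
variable (σ ρ) in
noncomputable def circleFactor (j : Fin n) (θ : ℝ) : ℂ :=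
  if σ j < ρ then σ j * exp (-(θ * I)) + ρ else σ j + ρ * exp (θ * I)

lemma prod_add_mul_exp_eq_pow_mul_prod (θ : ℝ) :
    ∏ j, ((σ j : ℂ) + ρ * exp (θ * I)) =
      exp (θ * I) ^ #{j | σ j < ρ} * ∏ j, circleFactor σ ρ j θ := by
  have hfactor : ∀ j, (σ j : ℂ) + ρ * exp (θ * I) =
      (if σ j < ρ then exp (θ * I) else 1) * circleFactor σ ρ j θ := by
    intro j
    unfold circleFactor
    split_ifs
    · rw [mul_add, ← mul_assoc, mul_comm (exp _), mul_assoc, ← exp_add, add_neg_cancel, exp_zero]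
      ring
    · rw [one_mul]
  simp_rw [hfactor, prod_mul_distrib, prod_ite, prod_const_one, mul_one, prod_const]

lemma circleFactor_re_pos {j : Fin n} (hσ : 0 ≤ σ j) (hρ : 0 ≤ ρ) (hne : σ j ≠ ρ) (θ : ℝ) :
    0 < (circleFactor σ ρ j θ).re := by
  unfold circleFactor
  split_ifs with h
  · rw [← neg_mul, ← ofReal_neg]
    simp only [add_re, re_ofReal_mul, exp_ofReal_mul_I_re, ofReal_re]
    nlinarith [Real.neg_one_le_cos (-θ)]
  · simp only [add_re, re_ofReal_mul, exp_ofReal_mul_I_re, ofReal_re]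
    nlinarith [Real.neg_one_le_cos θ, lt_of_le_of_ne (not_lt.mp h) hne.symm]

lemma continuous_circleFactor (j : Fin n) : Continuous (circleFactor σ ρ j) := by
  unfold circleFactor
  split_ifs <;> fun_prop

lemma continuous_arg_circleFactor (hσ : ∀ j, 0 ≤ σ j) (hρ : 0 ≤ ρ) (hne : ∀ j, σ j ≠ ρ)
    (j : Fin n) : Continuous fun θ => arg (circleFactor σ ρ j θ) :=
  continuous_iff_continuousAt.2 fun θ =>
    (continuousAt_arg (mem_slitPlane_iff.2 (.inl (circleFactor_re_pos (hσ j) hρ (hne j) θ)))).comp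
      (continuous_circleFactor j).continuousAt

lemma arg_circleFactor_zero (hσ : ∀ j, 0 ≤ σ j) (hρ : 0 ≤ ρ) (j : Fin n) :
    arg (circleFactor σ ρ j 0) = 0 := by
  have : circleFactor σ ρ j 0 = ((σ j + ρ : ℝ) : ℂ) := by
    unfold circleFactor
    split_ifs <;> simp
  rw [this, arg_ofReal_of_nonneg (add_nonneg (hσ j) hρ)]

lemma circleFactor_two_pi (j : Fin n) :
    circleFactor σ ρ j (2 * Real.pi) = circleFactor σ ρ j 0 := by
  unfold circleFactor
  push_cast
  rw [exp_two_pi_mul_I, exp_neg, exp_two_pi_mul_I]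
  simp

end Circle

def IsDominantTerm {n : ℕ} (σ : Fin n → ℝ) (m : ℕ) (ρ : ℝ) : Prop :=
  ∑ i ∈ (range (n + 1)).erase m, esym σ (n - i) * ρ ^ i < esym σ (n - m) * ρ ^ m

section Counting

variable {n m : ℕ} {σ : Fin n → ℝ} {ρ : ℝ}

lemma IsDominantTerm.re_prod_mul_exp_pos (hdom : IsDominantTerm σ m ρ) (hσ : ∀ j, 0 ≤ σ j)
    (hρ : 0 ≤ ρ) (hm : m ≤ n) (θ : ℝ) :
    0 < ((∏ j, ((σ j : ℂ) + ρ * exp (θ * I))) * exp (-(θ * I)) ^ m).re := by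
  have hnorm : ∀ i, ‖(esym σ (n - i) : ℂ) * (ρ * exp (θ * I)) ^ i * exp (-(θ * I)) ^ m‖ =
      esym σ (n - i) * ρ ^ i := by
    intro i
    rw [← neg_mul, ← ofReal_neg]
    simp only [norm_mul, norm_pow, norm_exp_ofReal_mul_I, norm_real, Real.norm_eq_abs,
      abs_of_nonneg (esym_nonneg hσ _), abs_of_nonneg hρ, one_pow, mul_one]
  have hmain : (esym σ (n - m) : ℂ) * (ρ * exp (θ * I)) ^ m * exp (-(θ * I)) ^ m =
      ((esym σ (n - m) * ρ ^ m : ℝ) : ℂ) := by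
    rw [mul_assoc, ← mul_pow, mul_assoc, ← exp_add, add_neg_cancel, exp_zero, mul_one]
    push_cast
    ring
  rw [prod_ofReal_add_eq_sum_esym, ← add_sum_erase _ _ (mem_range.mpr (Nat.lt_succ_of_le hm)),
    add_mul, sum_mul, add_re, hmain, ofReal_re]
  have hrest : -∑ i ∈ (range (n + 1)).erase m, esym σ (n - i) * ρ ^ i ≤
      (∑ i ∈ (range (n + 1)).erase m,
        (esym σ (n - i) : ℂ) * (ρ * exp (θ * I)) ^ i * exp (-(θ * I)) ^ m).re := by
    rw [← sum_congr rfl fun i _ => hnorm i]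
    exact (neg_le_neg (norm_sum_le _ _)).trans (neg_le_of_abs_le (abs_re_le_norm _))
  unfold IsDominantTerm at hdom
  linarith

lemma IsDominantTerm.apply_ne (hdom : IsDominantTerm σ m ρ) (hσ : ∀ j, 0 ≤ σ j) (hρ : 0 ≤ ρ)
    (hm : m ≤ n) (j : Fin n) : σ j ≠ ρ := by
  intro hj
  have := hdom.re_prod_mul_exp_pos hσ hρ hm Real.pi
  rw [prod_eq_zero (mem_univ j) (by rw [exp_pi_mul_I, hj]; ring)] at this
  simp at this

theorem IsDominantTerm.card_filter_lt_eq (hdom : IsDominantTerm σ m ρ) (hσ : ∀ j, 0 ≤ σ j)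
    (hρ : 0 ≤ ρ) (hm : m ≤ n) :
    #{j | σ j < ρ} = m := by
  have hne := hdom.apply_ne hσ hρ hm
  set k := #{j | σ j < ρ}
  -- a continuous argument of `p (ρ e^{iθ}) e^{-imθ}`; it stays in `(-π/2, π/2)`
  set F : ℝ → ℝ := fun θ => ((k : ℝ) - m) * θ + ∑ j, arg (circleFactor σ ρ j θ)
  have hF : Continuous F := (continuous_const.mul continuous_id).add
    (continuous_finsetSum _ fun j _ => continuous_arg_circleFactor hσ hρ hne j)
  have hcos : ∀ θ, 0 < Real.cos (F θ) := by
    intro θ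
    have hre := hdom.re_prod_mul_exp_pos hσ hρ hm θ
    rw [prod_add_mul_exp_eq_pow_mul_prod, Complex.prod_eq_prod_norm_mul_exp_sum_arg] at hre
    set R := ∏ j, ‖circleFactor σ ρ j θ‖
    set A := ∑ j, arg (circleFactor σ ρ j θ)
    have hpolar : exp (θ * I) ^ k * ((R : ℂ) * exp (A * I)) * exp (-(θ * I)) ^ m =
        R * exp (F θ * I) := by
      rw [show (F θ : ℂ) * I = k * (θ * I) + A * I + m * -(θ * I) by
          simp only [F, A]; push_cast; ring,
        exp_add, exp_add, exp_nat_mul, exp_nat_mul]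
      ring
    rw [hpolar, re_ofReal_mul, exp_ofReal_mul_I_re] at hre
    exact pos_of_mul_pos_right hre (prod_nonneg fun j _ => norm_nonneg _)
  have h₀ : F 0 = 0 := by simp [F, arg_circleFactor_zero hσ hρ]
  have h2π : F (2 * Real.pi) = ((k : ℝ) - m) * (2 * Real.pi) := by
    simp [F, circleFactor_two_pi, arg_circleFactor_zero hσ hρ]
  have hlt := abs_lt.mp (h2π ▸ abs_lt_pi_div_two_of_cos_pos hF hcos h₀ (2 * Real.pi))
  have hpi := Real.pi_pos
  rcases lt_trichotomy k m with h | h | h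
  · have : (k : ℝ) + 1 ≤ m := by exact_mod_cast h
    nlinarith
  · exact h
  · have : (m : ℝ) + 1 ≤ k := by exact_mod_cast h
    nlinarith

end Counting

section Antitone

variable {n : ℕ} {σ : Fin n → ℝ}

lemma lt_iff_of_card_filter_lt_eq (hσ : Antitone σ) {ρ : ℝ} {m : ℕ}
    (hcard : #{j | σ j < ρ} = m) (i : Fin n) : σ i < ρ ↔ n - m ≤ i := by
  have hi := i.isLt
  constructor
  · intro h
    have := card_le_card fun j (hj : j ∈ Ici i) =>
      mem_filter.2 ⟨mem_univ j, (hσ (mem_Ici.1 hj)).trans_lt h⟩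
    rw [Fin.card_Ici, hcard] at this
    omega
  · intro h
    by_contra h'
    have := card_le_card fun j (hj : j ∈ ({j | σ j < ρ} : Finset (Fin n))) =>
      mem_Ioi.2 (lt_of_not_ge fun hji => h' ((hσ hji).trans_lt (mem_filter.1 hj).2))
    rw [Fin.card_Ioi, hcard] at this
    omega

lemma pos_of_lt_card_filter_ne_zero (hσ₀ : ∀ j, 0 ≤ σ j) (hσ : Antitone σ) {i : Fin n}
    (hi : (i : ℕ) < #{j | σ j ≠ 0}) : 0 < σ i := by
  refine (hσ₀ i).lt_of_ne fun h => ?_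
  have := card_le_card fun j (hj : j ∈ ({j | σ j ≠ 0} : Finset (Fin n))) =>
    mem_Iio.2 (lt_of_not_ge fun hij => (mem_filter.1 hj).2 (le_antisymm (h ▸ hσ hij) (hσ₀ j)))
  rw [Fin.card_Iio] at this
  omega

end Antitone

open scoped ComplexOrder in
lemma card_filter_sqrt_eigenvalues_ne_zero {𝕜 m n : Type*} [RCLike 𝕜] [Fintype m] [Fintype n]
    [DecidableEq n] (M : Matrix m n 𝕜) {σ : n → ℝ} (e : n ≃ n)
    (hσ : ∀ i, σ i = √((Matrix.isHermitian_conjTranspose_mul_self M).eigenvalues (e i))) :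
    #{i | σ i ≠ 0} = M.rank := by
  rw [← Matrix.rank_conjTranspose_mul_self, Matrix.IsHermitian.rank_eq_card_non_zero_eigs,
    ← Fintype.card_subtype]
  refine Fintype.card_congr (e.subtypeEquiv fun i => ?_)
  rw [hσ, ne_eq, Real.sqrt_eq_zero (Matrix.eigenvalues_conjTranspose_mul_self_nonneg M _)]

lemma le_pow_of_rpow_one_div_le {y c : ℝ} {j : ℕ} (hy : 0 ≤ y) (hj : j ≠ 0)
    (h : y ^ (1 / (j : ℝ)) ≤ c) : y ≤ c ^ j := by
  rw [one_div] at h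
  calc y = (y ^ (j : ℝ)⁻¹) ^ j := (Real.rpow_inv_natCast_pow hy hj).symm
    _ ≤ c ^ j := pow_le_pow_left₀ (Real.rpow_nonneg hy _) h j

section RatioBounds

variable {n m : ℕ} {σ : Fin n → ℝ}

lemma bQ_nonneg (hσ : ∀ i, 0 ≤ σ i) : 0 ≤ bQ n σ m :=
  Real.sSup_nonneg <| by
    rintro _ ⟨i, -, rfl⟩
    exact Real.rpow_nonneg (div_nonneg (esym_nonneg hσ _) (esym_nonneg hσ _)) _

lemma esym_le_bQ_pow_mul (hσ : ∀ i, 0 ≤ σ i) (hs : 0 < esym σ (n - m)) {i : ℕ} (hi : i < m) :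
    esym σ (n - i) ≤ bQ n σ m ^ (m - i) * esym σ (n - m) := by
  rw [← div_le_iff₀ hs]
  refine le_pow_of_rpow_one_div_le (div_nonneg (esym_nonneg hσ _) hs.le) (by omega) ?_
  rw [Nat.cast_sub hi.le]
  exact le_csSup ((Set.finite_Iio m).image _).bddAbove ⟨i, hi, rfl⟩

lemma esym_le_gQ_pow_mul (hσ : ∀ i, 0 ≤ σ i) (hs : 0 < esym σ (n - m)) {i : ℕ} (hmi : m < i)
    (hin : i ≤ n) : esym σ (n - i) ≤ gQ n σ m ^ (i - m) * esym σ (n - m) := by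
  rw [← div_le_iff₀ hs, gQ, if_neg (by omega)]
  refine le_pow_of_rpow_one_div_le (div_nonneg (esym_nonneg hσ _) hs.le) (by omega) ?_
  rw [Nat.cast_sub hmi.le]
  exact le_csSup ((Set.finite_Icc _ _).image _).bddAbove ⟨i, ⟨hmi, hin⟩, rfl⟩

lemma gQ_pos (hσ : ∀ i, 0 ≤ σ i) (hm : m ≤ n) (hpos : ∀ i : Fin n, (i : ℕ) < n - m → 0 < σ i) :
    0 < gQ n σ m := by
  unfold gQ
  split_ifs with hmn
  · exact one_pos
  · have hs : ∀ k ≤ n - m, 0 < esym σ k := fun k hk =>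
      esym_pos hσ (by omega) fun i hi => hpos i (by omega)
    refine lt_of_lt_of_le ?_ (le_csSup ((Set.finite_Icc _ _).image _).bddAbove
      ⟨m + 1, ⟨le_rfl, by omega⟩, rfl⟩)
    exact Real.rpow_pos_of_pos (div_pos (hs _ (by omega)) (hs _ le_rfl)) _

end RatioBounds

lemma quadratic_neg_of_mem_Ioo_roots {a u : ℝ} (hdisc : 0 ≤ (3 * a + 1) ^ 2 - 16 * a)
    (h₁ : (3 * a + 1 - √((3 * a + 1) ^ 2 - 16 * a)) / 4 < u)
    (h₂ : u < (3 * a + 1 + √((3 * a + 1) ^ 2 - 16 * a)) / 4) :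
    2 * u ^ 2 - (3 * a + 1) * u + 2 * a < 0 := by
  nlinarith [Real.sq_sqrt hdisc, mul_pos (sub_pos.2 h₁) (sub_pos.2 h₂)]

lemma ratio_sum_lt_one_of_quadratic_neg {a u : ℝ} (ha₀ : 0 ≤ a) (ha₁ : a < 1)
    (hQ : 2 * u ^ 2 - (3 * a + 1) * u + 2 * a < 0) :
    a < u ∧ u < 1 ∧ a / u / (1 - a / u) + u / (1 - u) < 1 := by
  have hau : a < u := by
    by_contra! h
    nlinarith [mul_nonneg (sub_nonneg.2 h) (by linarith : (0 : ℝ) ≤ 1 + a - 2 * u)]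
  have hu₁ : u < 1 := by
    by_contra! h
    nlinarith [mul_nonneg (sub_nonneg.2 h) (by linarith : (0 : ℝ) ≤ 2 * u + 1 - 3 * a)]
  have hu : 0 < u := ha₀.trans_lt hau
  refine ⟨hau, hu₁, ?_⟩
  rw [show a / u / (1 - a / u) = a / (u - a) by field_simp,
    div_add_div _ _ (sub_pos.2 hau).ne' (sub_pos.2 hu₁).ne',
    div_lt_one (mul_pos (sub_pos.2 hau) (sub_pos.2 hu₁))]
  nlinarith

lemma card_filter_lt_eq_of_quadratic_neg {n m : ℕ} {σ : Fin n → ℝ} (hσ : ∀ i, 0 ≤ σ i)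
    (hm : m ≤ n) (hs : 0 < esym σ (n - m)) (hg : 0 < gQ n σ m) (ha : aQ n σ m < 1) {ρ : ℝ}
    (hQ : 2 * (gQ n σ m * ρ) ^ 2 - (3 * aQ n σ m + 1) * (gQ n σ m * ρ) + 2 * aQ n σ m < 0) :
    #{j | σ j < ρ} = m := by
  have hb := bQ_nonneg (m := m) hσ
  obtain ⟨hau, hu₁, hsum⟩ := ratio_sum_lt_one_of_quadratic_neg (mul_nonneg hb hg.le) ha hQ
  have hρ : 0 < ρ := pos_of_mul_pos_right ((mul_nonneg hb hg.le).trans_lt hau) hg.le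
  have hbρ : bQ n σ m / ρ = aQ n σ m / (gQ n σ m * ρ) := by
    rw [aQ]
    field_simp
  have hb₁ : bQ n σ m / ρ < 1 := by
    rwa [hbρ, div_lt_one ((mul_nonneg hb hg.le).trans_lt hau)]
  refine IsDominantTerm.card_filter_lt_eq ?_ hσ hρ.le hm
  exact sum_erase_mul_pow_lt (c := fun i => esym σ (n - i)) hm hs hb hg.le hρ
    (fun i hi => esym_le_bQ_pow_mul hσ hs hi) (fun i hmi hin => esym_le_gQ_pow_mul hσ hs hmi hin)
    hb₁ hu₁ (hbρ ▸ hsum)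

lemma lt_and_le_of_card_filter_lt_eq_on_Ioo {n m : ℕ} {σ : Fin n → ℝ} (hσ : Antitone σ)
    {ε ε' : ℝ} (hεε' : ε < ε') (hcard : ∀ ρ ∈ Set.Ioo ε ε', #{j | σ j < ρ} = m) :
    (∀ i : Fin n, (i : ℕ) < n - m → ε < σ i) ∧ (∀ i : Fin n, n - m ≤ (i : ℕ) → σ i ≤ ε) := by
  have hlt ρ (hρ : ρ ∈ Set.Ioo ε ε') (i : Fin n) := lt_iff_of_card_filter_lt_eq hσ (hcard ρ hρ) i
  have hmid : (ε + ε') / 2 ∈ Set.Ioo ε ε' := ⟨by linarith, by linarith⟩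
  refine ⟨fun i hi => hmid.1.trans_le (not_lt.1 fun h => ?_), fun i hi => ?_⟩
  · have := (hlt _ hmid i).1 h
    omega
  · refine le_of_forall_gt_imp_ge_of_dense fun ρ hρ => ?_
    have hmem : min ρ ((ε + ε') / 2) ∈ Set.Ioo ε ε' :=
      ⟨lt_min hρ hmid.1, (min_le_right _ _).trans_lt hmid.2⟩
    exact ((hlt _ hmem i).2 hi).le.trans (min_le_left _ _)

theorem stmt0_general {s n : ℕ}
    (M : Matrix (Fin s) (Fin n) ℂ) (σ : Fin n → ℝ)
    (hσnonneg : ∀ i, 0 ≤ σ i)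
    (hσanti : ∀ i j : Fin n, i ≤ j → σ j ≤ σ i)
    -- `σ` is the family of singular values of `M`, i.e. (up to reordering) the square
    -- roots of the eigenvalues of `Mᴴ * M`:
    (e : Fin n ≃ Fin n)
    (hσsv : ∀ i, σ i =
      Real.sqrt ((Matrix.isHermitian_conjTranspose_mul_self M).eigenvalues (e i)))
    (r : ℕ) (hrank : M.rank = r)
    (m : ℕ) (hm₁ : n - r ≤ m) (hm₂ : m ≤ n)
    (ha : aQ n σ m < 1 / 9)
    (ε : ℝ)
    (hε : ε = (3 * aQ n σ m + 1 -
      Real.sqrt ((3 * aQ n σ m + 1) ^ 2 - 16 * aQ n σ m)) / (4 * gQ n σ m)) :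
    (∀ i : Fin n, (i : ℕ) < n - m → ε < σ i) ∧
    (∀ i : Fin n, n - m ≤ (i : ℕ) → σ i ≤ ε) := by
  have hpos : ∀ i : Fin n, (i : ℕ) < n - m → 0 < σ i := fun i hi =>
    pos_of_lt_card_filter_ne_zero hσnonneg hσanti <| by
      rw [card_filter_sqrt_eigenvalues_ne_zero M e hσsv, hrank]
      omega
  have hs : 0 < esym σ (n - m) := esym_pos hσnonneg (Nat.sub_le n m) hpos
  have hg : 0 < gQ n σ m := gQ_pos hσnonneg hm₂ hpos
  have ha₀ : 0 ≤ aQ n σ m := mul_nonneg (bQ_nonneg hσnonneg) hg.le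
  set a := aQ n σ m
  set D := √((3 * a + 1) ^ 2 - 16 * a)
  have hdisc : 0 < (3 * a + 1) ^ 2 - 16 * a := by nlinarith
  have hD : 0 < D := Real.sqrt_pos.2 hdisc
  subst hε
  refine lt_and_le_of_card_filter_lt_eq_on_Ioo hσanti (ε' := (3 * a + 1 + D) / (4 * gQ n σ m))
    (by gcongr; linarith) fun ρ ⟨hρ₁, hρ₂⟩ => ?_
  rw [div_lt_iff₀ (by positivity)] at hρ₁
  rw [lt_div_iff₀ (by positivity)] at hρ₂
  exact card_filter_lt_eq_of_quadratic_neg hσnonneg hm₂ hs hg (by linarith) <|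
    quadratic_neg_of_mem_Ioo_roots hdisc.le (by linarith) (by linarith)

/-- Let `s ≥ n ≥ 1` and let `M` be an `s × n` complex matrix of rank `r`
with singular values `σ₁ ≥ … ≥ σₙ ≥ 0`.  Let `n - r ≤ m ≤ n` and set
`ε = (3 a_m + 1 - √((3 a_m + 1)² - 16 a_m)) / (4 g_m)`.  If `a_m < 1/9` then `M` has
`ε`-rank equal to `n - m`, i.e. `σ_i > ε` for `i ≤ n - m` and `σ_i ≤ ε` for `i > n - m`. -/
theorem stmt0 {s n : ℕ} (hn : 1 ≤ n) (hsn : n ≤ s)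
    (M : Matrix (Fin s) (Fin n) ℂ) (σ : Fin n → ℝ)
    (hσnonneg : ∀ i, 0 ≤ σ i)
    (hσanti : ∀ i j : Fin n, i ≤ j → σ j ≤ σ i)
    -- `σ` is the family of singular values of `M`, i.e. (up to reordering) the square
    -- roots of the eigenvalues of `Mᴴ * M`:
    (e : Fin n ≃ Fin n)
    (hσsv : ∀ i, σ i =
      Real.sqrt ((Matrix.isHermitian_conjTranspose_mul_self M).eigenvalues (e i)))
    (r : ℕ) (hrank : M.rank = r)
    (m : ℕ) (hm₁ : n - r ≤ m) (hm₂ : m ≤ n)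
    (ha : aQ n σ m < 1 / 9)
    (ε : ℝ)
    (hε : ε = (3 * aQ n σ m + 1 -
      Real.sqrt ((3 * aQ n σ m + 1) ^ 2 - 16 * aQ n σ m)) / (4 * gQ n σ m)) :
    (∀ i : Fin n, (i : ℕ) < n - m → ε < σ i) ∧
    (∀ i : Fin n, n - m ≤ (i : ℕ) → σ i ≤ ε) :=
  stmt0_general M σ hσnonneg hσanti e hσsv r hrank m hm₁ hm₂ ha ε hε
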